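/- Let n ≥ 1 and τ ∈ ℕ. For each subject i ∈ Fin n and time t ∈ Fin τ, let w_{i,t} ≥ 0, v_{i,t} ∈ [0,1], q_{i,t} ∈ (0,1), and let u_i ∈ ℝ with ψ̂ = (1/n)·Σ_i u_i. For each t ∈ Fin τ define F_t(ε) = (1/n)·Σ_i w_{i,t} · L(σ(logit q_{i,t} + ε), v_{i,t}). If for every t there is ε*_t ∈ ℝ with F_t′(ε*_t) = 0, then for every t one has Σ_i w_{i,t} · (v_{i,t} − σ(logit q_{i,t} + ε*_t)) = 0, and consequently (1/n)·Σ_i [ (u_i − ψ̂) + Σ_t w_{i,t} · (v_{i,t} − σ(logit q_{i,t} + ε*_t)) ] = 0. -/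

import Mathlib

open Real Finset

/-- The sigmoid function `σ(x) = eˣ / (1 + eˣ)`. -/
noncomputable def sigmoid (x : ℝ) : ℝ := Real.exp x / (1 + Real.exp x)

/-- The logit function `logit q = log (q / (1 - q))`. -/
noncomputable def logit (q : ℝ) : ℝ := Real.log (q / (1 - q))

/-- The binary cross-entropy loss `L(ŷ, y) = -(y log ŷ + (1-y) log (1-ŷ))`. -/
noncomputable def bce (yhat y : ℝ) : ℝ := -(y * Real.log yhat + (1 - y) * Real.log (1 - yhat))

lemma one_add_exp_pos (x : ℝ) : (0:ℝ) < 1 + Real.exp x := by positivity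

lemma bce_sigmoid (x y : ℝ) : bce (_root_.sigmoid x) y = Real.log (1 + Real.exp x) - y * x := by
  have h1 : (0:ℝ) < 1 + Real.exp x := one_add_exp_pos x
  have hlog1 : Real.log (_root_.sigmoid x) = x - Real.log (1 + Real.exp x) := by
    rw [_root_.sigmoid, Real.log_div (Real.exp_ne_zero x) (ne_of_gt h1), Real.log_exp]
  have h2 : 1 - _root_.sigmoid x = 1 / (1 + Real.exp x) := by
    rw [_root_.sigmoid]; field_simp; ring
  have hlog2 : Real.log (1 - _root_.sigmoid x) = -Real.log (1 + Real.exp x) := by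
    rw [h2, Real.log_div one_ne_zero (ne_of_gt h1), Real.log_one]; ring
  rw [bce, hlog1, hlog2]; ring

lemma hasDerivAt_bce_sigmoid (a y ε : ℝ) :
    HasDerivAt (fun ε : ℝ => bce (_root_.sigmoid (a + ε)) y) (_root_.sigmoid (a + ε) - y) ε := by
  have heq : (fun ε : ℝ => bce (_root_.sigmoid (a + ε)) y)
      = fun ε : ℝ => Real.log (1 + Real.exp (a + ε)) - y * (a + ε) := by
    funext e; exact bce_sigmoid (a + e) y
  rw [heq]
  have h1 : HasDerivAt (fun e : ℝ => a + e) 1 ε := (hasDerivAt_id ε).const_add a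
  have h2 : HasDerivAt (fun e : ℝ => Real.exp (a + e)) (Real.exp (a + ε)) ε := by
    simpa using h1.exp
  have h3 : HasDerivAt (fun e : ℝ => 1 + Real.exp (a + e)) (Real.exp (a + ε)) ε :=
    h2.const_add 1
  have h4 : HasDerivAt (fun e : ℝ => Real.log (1 + Real.exp (a + e)))
      (Real.exp (a + ε) / (1 + Real.exp (a + ε))) ε :=
    h3.log (ne_of_gt (one_add_exp_pos _))
  have h5 : HasDerivAt (fun e : ℝ => y * (a + e)) y ε := by simpa using h1.const_mul y
  simpa [_root_.sigmoid] using h4.fun_sub h5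

/-- Sequential targeting: if for each `t` the fluctuation `ε*_t` is a critical point of
the `t`-specific empirical targeting loss
`F_t(ε) = (1/n) Σ_i w_{i,t} L(σ(logit q_{i,t} + ε), v_{i,t})`,
then each `t`-specific weighted residual sum vanishes, and consequently the empirical
mean of the estimated efficient influence function vanishes. -/
theorem stmt_3 (n : ℕ) (hn : 1 ≤ n) (τ : ℕ)
    (w v q : Fin n → Fin τ → ℝ) (u : Fin n → ℝ)
    (hw : ∀ i t, 0 ≤ w i t) (hv : ∀ i t, v i t ∈ Set.Icc (0 : ℝ) 1)
    (hq : ∀ i t, q i t ∈ Set.Ioo (0 : ℝ) 1)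
    (ψ : ℝ) (hψ : ψ = (1 / (n : ℝ)) * ∑ i : Fin n, u i)
    (εs : Fin τ → ℝ)
    (hcrit : ∀ t : Fin τ, deriv (fun ε : ℝ =>
        (1 / (n : ℝ)) * ∑ i : Fin n,
          w i t * bce (_root_.sigmoid (logit (q i t) + ε)) (v i t)) (εs t) = 0) :
    (∀ t : Fin τ, ∑ i : Fin n, w i t * (v i t - _root_.sigmoid (logit (q i t) + εs t)) = 0) ∧
    (1 / (n : ℝ)) * ∑ i : Fin n,
        ((u i - ψ) + ∑ t : Fin τ, w i t * (v i t - _root_.sigmoid (logit (q i t) + εs t))) = 0 := by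
  have hn0 : (n : ℝ) ≠ 0 := Nat.cast_ne_zero.mpr (by omega)
  have key : ∀ t : Fin τ, ∑ i : Fin n, w i t * (v i t - _root_.sigmoid (logit (q i t) + εs t)) = 0 := by
    intro t
    have hD : HasDerivAt (fun ε : ℝ =>
        (1 / (n : ℝ)) * ∑ i : Fin n, w i t * bce (_root_.sigmoid (logit (q i t) + ε)) (v i t))
        ((1 / (n : ℝ)) * ∑ i : Fin n, w i t * (_root_.sigmoid (logit (q i t) + εs t) - v i t))
        (εs t) := by
      apply HasDerivAt.const_mul
      exact HasDerivAt.fun_sum (fun i _ =>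
        (hasDerivAt_bce_sigmoid (logit (q i t)) (v i t) (εs t)).const_mul (w i t))
    have h0 := hcrit t
    rw [hD.deriv] at h0
    have h1 : ∑ i : Fin n, w i t * (_root_.sigmoid (logit (q i t) + εs t) - v i t) = 0 := by
      field_simp at h0
      simpa using h0
    calc ∑ i : Fin n, w i t * (v i t - _root_.sigmoid (logit (q i t) + εs t))
        = -∑ i : Fin n, w i t * (_root_.sigmoid (logit (q i t) + εs t) - v i t) := by
          rw [← Finset.sum_neg_distrib]; congr 1; funext i; ring
      _ = 0 := by rw [h1, neg_zero]
  refine ⟨key, ?_⟩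
  have : ∑ i : Fin n, ((u i - ψ) + ∑ t : Fin τ, w i t * (v i t - _root_.sigmoid (logit (q i t) + εs t)))
      = 0 := by
    rw [Finset.sum_add_distrib, Finset.sum_comm]
    simp only [key, Finset.sum_const_zero, add_zero, Finset.sum_sub_distrib,
      Finset.sum_const, Finset.card_univ, Fintype.card_fin, nsmul_eq_mul, hψ]
    field_simp; ring
  rw [this, mul_zero]
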